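/- arXiv:2501.05148 — 2 statements merged into one kernel-verified Lean document; each statement's English description precedes it below -/
import Mathlib

section
/- For n ≥ 2, an oriented star K⃗_{1,n} is {1,2}-antimagic if and only if n = 2 and its center is neither a source nor a sink. -/
/-!
In the star, a sink leaf reaches nothing, the centre reaches exactly the sink leaves, and a source
leaf reaches the centre and, in two steps, every sink leaf. So under any labelling `g` with positive
labels a sink leaf has `{1, 2}`-weight `0`, the centre has weight `S`, the sum of the sink-leaf
labels, and a source leaf has weight `g(centre) + S`; these three values are distinct (`S > 0` once
a sink leaf exists). Hence the weights are pairwise distinct iff no two leaves have the same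
orientation, which for `n ≥ 2` means `n = 2` with one source leaf and one sink leaf.
-/

/-- `relPow A k u v` : there is a directed walk of length `k` from `u` to `v`
along the arc relation `A`. -/
def relPow {V : Type*} (A : V → V → Prop) : ℕ → V → V → Prop
  | 0 => fun u v => u = v
  | k + 1 => fun u v => ∃ w, A u w ∧ relPow A k w v

/-- `distEq A u v k` : the directed distance from `u` to `v` is exactly `k`,
i.e. `k` is the length of a shortest directed path from `u` to `v`. -/
def distEq {V : Type*} (A : V → V → Prop) (u v : V) (k : ℕ) : Prop :=
  relPow A k u v ∧ ∀ j < k, ¬ relPow A j u v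

open Classical in
/-- The `D`-weight of vertex `u` under labeling `g`: the sum of the labels of all
vertices whose directed distance from `u` lies in `D`. -/
noncomputable def weightD {V : Type*} [Fintype V] (A : V → V → Prop) (D : Set ℕ)
    (g : V → ℕ) (u : V) : ℕ :=
  ∑ v : V, if ∃ k ∈ D, distEq A u v k then g v else 0

/-- A directed graph (given by its arc relation `A`) is `D`-antimagic if there is a
bijective labeling of the vertices with `{1, …, |V|}` whose `D`-weights are pairwise
distinct. -/
def IsDAntimagic {V : Type*} [Fintype V] (A : V → V → Prop) (D : Set ℕ) : Prop :=
  ∃ g : V → ℕ, Set.BijOn g Set.univ (Set.Icc 1 (Fintype.card V)) ∧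
    Function.Injective (weightD A D g)

/-- A vertex is a source if all its incident arcs are outgoing (no incoming arcs). -/
def IsSource {V : Type*} (A : V → V → Prop) (u : V) : Prop := ∀ v, ¬ A v u

/-- A vertex is a sink if all its incident arcs are incoming (no outgoing arcs). -/
def IsSink {V : Type*} (A : V → V → Prop) (u : V) : Prop := ∀ v, ¬ A u v

/-- The oriented star `K⃗_{1,n}`: vertices are `Option (Fin n)`, with `none` the center
and `some i` the leaves; `σ i = true` iff leaf `i` is a source (its arc points to the
center), and `σ i = false` iff leaf `i` is a sink. -/
def starArc (n : ℕ) (σ : Fin n → Bool) :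
    Option (Fin n) → Option (Fin n) → Prop :=
  fun u w => ∃ i : Fin n,
    (u = some i ∧ w = none ∧ σ i = true) ∨
    (u = none ∧ w = some i ∧ σ i = false)

lemma exists_distEq_one_two_iff {V : Type*} (A : V → V → Prop) (u v : V) :
    (∃ k ∈ ({1, 2} : Set ℕ), distEq A u v k) ↔
      u ≠ v ∧ (A u v ∨ ∃ w, A u w ∧ A w v) := by
  simp only [Set.mem_insert_iff, Set.mem_singleton_iff, exists_eq_or_imp, exists_eq_left,
    distEq, Nat.forall_lt_succ_right, Nat.not_lt_zero, IsEmpty.forall_iff, forall_const,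
    true_and, relPow, exists_eq_right]
  tauto

lemma exists_bijOn_Icc_card (V : Type*) [Fintype V] :
    ∃ g : V → ℕ, Set.BijOn g Set.univ (Set.Icc 1 (Fintype.card V)) := by
  let e := Fintype.equivFin V
  refine ⟨fun v => e v + 1, fun v _ => ?_, fun v _ w _ h => e.injective (Fin.ext (by simpa using h)),
    fun m hm => ?_⟩
  · simp only [Set.mem_Icc]; omega
  · obtain ⟨hm1, hm2⟩ := hm
    exact ⟨e.symm ⟨m - 1, by omega⟩, trivial, by simp only [Equiv.apply_symm_apply]; omega⟩

section Star

variable {n : ℕ} (σ : Fin n → Bool) (g : Option (Fin n) → ℕ)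

@[simp]
lemma starArc_none_none : ¬ starArc n σ none none := by simp [starArc]

@[simp]
lemma starArc_none_some (j : Fin n) : starArc n σ none (some j) ↔ σ j = false := by
  simp [starArc]

@[simp]
lemma starArc_some_none (i : Fin n) : starArc n σ (some i) none ↔ σ i = true := by
  simp [starArc]

@[simp]
lemma starArc_some_some (i j : Fin n) : ¬ starArc n σ (some i) (some j) := by
  simp [starArc]

def sinkLeafLabelSum : ℕ := ∑ j, if σ j = false then g (some j) else 0

lemma weightD_starArc_none : weightD (starArc n σ) {1, 2} g none = sinkLeafLabelSum σ g := by
  classical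
  simp only [weightD, exists_distEq_one_two_iff]
  simp [Fintype.sum_option, Option.exists, sinkLeafLabelSum]

lemma weightD_starArc_some (i : Fin n) :
    weightD (starArc n σ) {1, 2} g (some i) =
      if σ i then g none + sinkLeafLabelSum σ g else 0 := by
  classical
  simp only [weightD, exists_distEq_one_two_iff]
  cases hi : σ i
  · simp [Fintype.sum_option, Option.exists, hi]
  · have hsink_ne : ∀ j, (¬ i = j ∧ σ j = false) ↔ σ j = false :=
      fun j => and_iff_right_of_imp fun hj hij => by simp [← hij, hi] at hj
    simp [Fintype.sum_option, Option.exists, sinkLeafLabelSum, hi, hsink_ne]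

lemma injective_of_injective_weightD_starArc
    (h : Function.Injective (weightD (starArc n σ) {1, 2} g)) : Function.Injective σ :=
  fun i j hij => Option.some_injective _ (h (by simp only [weightD_starArc_some, hij]))

lemma sinkLeafLabelSum_pos (hg : ∀ v, 0 < g v) {j : Fin n} (hj : σ j = false) :
    0 < sinkLeafLabelSum σ g :=
  calc 0 < g (some j) := hg _
    _ = if σ j = false then g (some j) else 0 := (if_pos hj).symm
    _ ≤ sinkLeafLabelSum σ g :=
      Finset.single_le_sum (f := fun j => if σ j = false then g (some j) else 0)
        (fun _ _ => Nat.zero_le _) (Finset.mem_univ j)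

lemma injective_weightD_starArc (hσ : Function.Injective σ) (hg : ∀ v, 0 < g v) :
    Function.Injective (weightD (starArc n σ) {1, 2} g) := by
  have hcentre := hg none
  rintro (_ | i) (_ | j) h <;> simp only [weightD_starArc_none, weightD_starArc_some] at h
  · rfl
  · cases hj : σ j <;> simp only [hj, Bool.false_eq_true, ↓reduceIte] at h
    · exact absurd h (sinkLeafLabelSum_pos σ g hg hj).ne'
    · omega
  · cases hi : σ i <;> simp only [hi, Bool.false_eq_true, ↓reduceIte] at h
    · exact absurd h.symm (sinkLeafLabelSum_pos σ g hg hi).ne'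
    · omega
  · congr
    apply hσ
    cases hi : σ i <;> cases hj : σ j <;>
      simp only [hi, hj, Bool.false_eq_true, ↓reduceIte] at h ⊢ <;> omega

theorem isDAntimagic_starArc_iff : IsDAntimagic (starArc n σ) {1, 2} ↔ Function.Injective σ := by
  constructor
  · rintro ⟨g, -, hg⟩
    exact injective_of_injective_weightD_starArc σ g hg
  · intro hσ
    obtain ⟨g, hg⟩ := exists_bijOn_Icc_card (Option (Fin n))
    exact ⟨g, hg, injective_weightD_starArc σ g hσ fun v => (hg.mapsTo trivial).1⟩

lemma not_isSource_starArc_none_iff : ¬ IsSource (starArc n σ) none ↔ ∃ i, σ i = true := by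
  simp [IsSource, Option.exists]

lemma not_isSink_starArc_none_iff : ¬ IsSink (starArc n σ) none ↔ ∃ i, σ i = false := by
  simp [IsSink, Option.exists]

end Star

lemma injective_fin_bool_iff_of_two_le {n : ℕ} (hn : 2 ≤ n) (σ : Fin n → Bool) :
    Function.Injective σ ↔ n = 2 ∧ (∃ i, σ i = true) ∧ ∃ i, σ i = false := by
  constructor
  · intro hσ
    have hn2 : n = 2 := le_antisymm (by simpa using Fintype.card_le_of_injective σ hσ) hn
    subst hn2
    have hsurj := (Finite.injective_iff_surjective_of_equiv finTwoEquiv).1 hσ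
    exact ⟨rfl, hsurj true, hsurj false⟩
  · rintro ⟨rfl, htrue, hfalse⟩
    exact (Finite.injective_iff_surjective_of_equiv finTwoEquiv).2 (Bool.forall_bool.2 ⟨hfalse, htrue⟩)

/-- For `n ≥ 2`, an oriented star `K⃗_{1,n}` is `{1,2}`-antimagic iff
`n = 2` and its center is neither a source nor a sink. -/
theorem orientedStar_oneTwo_antimagic_iff (n : ℕ) (hn : 2 ≤ n) (σ : Fin n → Bool) :
    IsDAntimagic (starArc n σ) {1, 2} ↔
      (n = 2 ∧ ¬ IsSource (starArc n σ) none ∧ ¬ IsSink (starArc n σ) none) := by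
  rw [isDAntimagic_starArc_iff, not_isSource_starArc_none_iff, not_isSink_starArc_none_iff]
  exact injective_fin_bool_iff_of_two_le hn σ
end

section
/- For m ≥ 2 and n ≥ 1, in any orientation, the disjoint union mK⃗_{1,n} of m isomorphic oriented stars is {0,1}-antimagic. -/
/-- `mK⃗_{1,n}` : the disjoint union of `m` identically oriented copies of the star
`K_{1,n}`; vertex `(j, none)` is the center of copy `j` and `(j, some i)` its `i`-th
leaf; `σ i = true` iff leaf `i` (in every copy) is a source. -/
def mStarArc (m n : ℕ) (σ : Fin n → Bool) :
    Fin m × Option (Fin n) → Fin m × Option (Fin n) → Prop :=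
  fun u w => ∃ (j : Fin m) (i : Fin n),
    (u = (j, some i) ∧ w = (j, none) ∧ σ i = true) ∨
    (u = (j, none) ∧ w = (j, some i) ∧ σ i = false)

section AntimagicAux

open Classical

lemma cond_iff {V : Type*} (A : V → V → Prop) (hA : ∀ u, ¬ A u u) (u v : V) :
    (∃ k ∈ ({0, 1} : Set ℕ), distEq A u v k) ↔ (u = v ∨ A u v) := by
  constructor
  · rintro ⟨k, hk, h1, -⟩
    rcases hk with rfl | rfl
    · exact Or.inl h1
    · obtain ⟨w, hw, hw2⟩ := h1
      cases hw2
      exact Or.inr hw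
  · rintro (rfl | h)
    · exact ⟨0, Or.inl rfl, rfl, by omega⟩
    · refine ⟨1, Or.inr rfl, ⟨v, h, rfl⟩, ?_⟩
      intro j hj
      interval_cases j
      rintro rfl
      exact hA _ h

variable {m n : ℕ} {σ : Fin n → Bool}

lemma mStar_irrefl (u : Fin m × Option (Fin n)) : ¬ mStarArc m n σ u u := by
  rintro ⟨j, i, ⟨h1, h2, -⟩ | ⟨h1, h2, -⟩⟩ <;> rw [h1] at h2 <;> simp at h2

lemma arc_some (j : Fin m) (i : Fin n) (v : Fin m × Option (Fin n)) :
    mStarArc m n σ (j, some i) v ↔ (σ i = true ∧ v = (j, none)) := by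
  constructor
  · rintro ⟨j', i', ⟨h1, h2, h3⟩ | ⟨h1, -, -⟩⟩
    · obtain ⟨h1a, h1b⟩ := Prod.ext_iff.mp h1
      obtain rfl := h1a
      obtain rfl : i' = i := by simpa [eq_comm] using h1b
      exact ⟨h3, h2⟩
    · simp [Prod.ext_iff] at h1
  · rintro ⟨h, rfl⟩
    exact ⟨j, i, Or.inl ⟨rfl, rfl, h⟩⟩

lemma arc_none (j : Fin m) (v : Fin m × Option (Fin n)) :
    mStarArc m n σ (j, none) v ↔ ∃ i : Fin n, σ i = false ∧ v = (j, some i) := by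
  constructor
  · rintro ⟨j', i', ⟨h1, -, -⟩ | ⟨h1, h2, h3⟩⟩
    · simp [Prod.ext_iff] at h1
    · obtain rfl : j = j' := by simpa [Prod.ext_iff] using h1
      exact ⟨i', h3, h2⟩
  · rintro ⟨i, h, rfl⟩
    exact ⟨j, i, Or.inr ⟨rfl, rfl, h⟩⟩

lemma weight_eq (g : Fin m × Option (Fin n) → ℕ) (u : Fin m × Option (Fin n)) :
    weightD (mStarArc m n σ) {0, 1} g u
      = ∑ v : Fin m × Option (Fin n), if u = v ∨ mStarArc m n σ u v then g v else 0 := by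
  unfold weightD
  refine Finset.sum_congr rfl fun v _ => ?_
  exact if_congr (cond_iff _ (fun u => mStar_irrefl u) u v) rfl rfl

lemma weight_sink (g : Fin m × Option (Fin n) → ℕ) (j : Fin m) (i : Fin n)
    (hi : σ i = false) :
    weightD (mStarArc m n σ) {0, 1} g (j, some i) = g (j, some i) := by
  rw [weight_eq]
  have : ∀ v : Fin m × Option (Fin n),
      (if (j, some i) = v ∨ mStarArc m n σ (j, some i) v then g v else 0)
        = if (j, some i) = v then g v else 0 := by
    intro v
    refine if_congr ?_ rfl rfl
    rw [arc_some]
    simp [hi]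
  simp_rw [this]
  rw [Finset.sum_ite_eq]
  simp

lemma weight_source (g : Fin m × Option (Fin n) → ℕ) (j : Fin m) (i : Fin n)
    (hi : σ i = true) :
    weightD (mStarArc m n σ) {0, 1} g (j, some i) = g (j, some i) + g (j, none) := by
  rw [weight_eq]
  have : ∀ v : Fin m × Option (Fin n),
      (if (j, some i) = v ∨ mStarArc m n σ (j, some i) v then g v else 0)
        = (if (j, some i) = v then g v else 0) + (if (j, none) = v then g v else 0) := by
    intro v
    by_cases h1 : (j, some i) = v
    · subst h1
      simp [arc_some, Prod.ext_iff]
    · by_cases h2 : (j, none) = v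
      · subst h2
        simp [h1, arc_some, hi]
      · have : ¬ mStarArc m n σ (j, some i) v := by
          rw [arc_some]
          rintro ⟨-, rfl⟩
          exact h2 rfl
        simp [h1, h2, this]
  simp_rw [this]
  rw [Finset.sum_add_distrib, Finset.sum_ite_eq, Finset.sum_ite_eq]
  simp

lemma weight_center (g : Fin m × Option (Fin n) → ℕ) (j : Fin m) :
    weightD (mStarArc m n σ) {0, 1} g (j, none)
      = g (j, none) + ∑ i ∈ Finset.univ.filter (fun i : Fin n => σ i = false), g (j, some i) := by
  rw [weight_eq]
  have : ∀ v : Fin m × Option (Fin n),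
      (if (j, none) = v ∨ mStarArc m n σ (j, none) v then g v else 0)
        = (if (j, none) = v then g v else 0)
          + (if mStarArc m n σ (j, none) v then g v else 0) := by
    intro v
    by_cases h1 : (j, none) = v
    · subst h1
      simp [mStar_irrefl]
    · simp [h1]
  simp_rw [this]
  rw [Finset.sum_add_distrib, Finset.sum_ite_eq]
  simp only [Finset.mem_univ, if_true]
  congr 1
  rw [← Finset.sum_filter]
  have himg : Finset.univ.filter (fun v => mStarArc m n σ (j, none) v)
      = (Finset.univ.filter (fun i : Fin n => σ i = false)).image (fun i => (j, some i)) := by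
    ext v
    simp only [Finset.mem_filter, Finset.mem_univ, true_and, Finset.mem_image, arc_none]
    constructor
    · rintro ⟨i, hi, rfl⟩; exact ⟨i, hi, rfl⟩
    · rintro ⟨i, hi, rfl⟩; exact ⟨i, hi, rfl⟩
  rw [himg, Finset.sum_image (fun i _ i' _ h => by simpa [Prod.ext_iff] using h)]

/-- rank of `i` within its `σ`-class -/
def rk {n : ℕ} (σ : Fin n → Bool) (i : Fin n) : ℕ :=
  (Finset.univ.filter (fun i' : Fin n => σ i' = σ i ∧ i' < i)).card

def sinkCt {n : ℕ} (σ : Fin n → Bool) : ℕ :=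
  (Finset.univ.filter (fun i : Fin n => σ i = false)).card

def srcCt {n : ℕ} (σ : Fin n → Bool) : ℕ :=
  (Finset.univ.filter (fun i : Fin n => σ i = true)).card

lemma rk_lt {n : ℕ} (σ : Fin n → Bool) (i : Fin n) :
    rk σ i < (Finset.univ.filter (fun i' : Fin n => σ i' = σ i)).card := by
  apply Finset.card_lt_card
  constructor
  · intro x hx
    simp only [Finset.mem_filter] at hx ⊢
    exact ⟨hx.1, hx.2.1⟩
  · intro hsub
    have hi : i ∈ Finset.univ.filter (fun i' : Fin n => σ i' = σ i) := by simp
    have := hsub hi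
    simp at this

lemma rk_lt_sink {n : ℕ} (σ : Fin n → Bool) (i : Fin n) (hi : σ i = false) :
    rk σ i < sinkCt σ := by
  have := rk_lt σ i
  rw [hi] at this
  exact this

lemma rk_lt_src {n : ℕ} (σ : Fin n → Bool) (i : Fin n) (hi : σ i = true) :
    rk σ i < srcCt σ := by
  have := rk_lt σ i
  rw [hi] at this
  exact this

lemma rk_strict_mono {n : ℕ} (σ : Fin n → Bool) {i i' : Fin n} (hσ : σ i = σ i')
    (hlt : i < i') : rk σ i < rk σ i' := by
  apply Finset.card_lt_card
  constructor
  · intro x hx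
    simp only [Finset.mem_filter] at hx ⊢
    exact ⟨hx.1, hx.2.1.trans (hσ ▸ rfl), lt_trans hx.2.2 hlt⟩
  · intro hsub
    have hi : i ∈ Finset.univ.filter (fun i'' : Fin n => σ i'' = σ i' ∧ i'' < i') := by
      simp [hσ, hlt]
    have := hsub hi
    simp at this

lemma rk_inj {n : ℕ} (σ : Fin n → Bool) {i i' : Fin n} (hσ : σ i = σ i')
    (h : rk σ i = rk σ i') : i = i' := by
  rcases lt_trichotomy i i' with hlt | he | hgt
  · exact absurd h (Nat.ne_of_lt (rk_strict_mono σ hσ hlt))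
  · exact he
  · exact absurd h.symm (Nat.ne_of_lt (rk_strict_mono σ hσ.symm hgt))

/-- the labeling, parametrized by offsets for sinks (p), sources (q), centers (c0) -/
def gLab (m n : ℕ) (σ : Fin n → Bool) (p q c0 : ℕ) : Fin m × Option (Fin n) → ℕ
  | (j, none) => c0 + (j : ℕ)
  | (j, some i) =>
      if σ i = true then q + (j : ℕ) * srcCt σ + rk σ i + 1
      else p + (j : ℕ) * sinkCt σ + rk σ i + 1

lemma gLab_none (m n : ℕ) (σ : Fin n → Bool) (p q c0 : ℕ) (j : Fin m) :
    gLab m n σ p q c0 (j, none) = c0 + (j : ℕ) := rfl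

lemma gLab_sink (m n : ℕ) (σ : Fin n → Bool) (p q c0 : ℕ) (j : Fin m) (i : Fin n)
    (hi : σ i = false) :
    gLab m n σ p q c0 (j, some i) = p + (j : ℕ) * sinkCt σ + rk σ i + 1 := by
  simp [gLab, hi]

lemma gLab_src (m n : ℕ) (σ : Fin n → Bool) (p q c0 : ℕ) (j : Fin m) (i : Fin n)
    (hi : σ i = true) :
    gLab m n σ p q c0 (j, some i) = q + (j : ℕ) * srcCt σ + rk σ i + 1 := by
  simp [gLab, hi]

lemma blk {a j j' r r' : ℕ} (hr : r < a) (hr' : r' < a) (h : j * a + r = j' * a + r') :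
    j = j' ∧ r = r' := by
  have hj : j = j' := by
    rcases Nat.lt_trichotomy j j' with hlt | he | hgt
    · exfalso
      have h2 : (j + 1) * a ≤ j' * a := Nat.mul_le_mul_right a hlt
      rw [add_mul, one_mul] at h2
      linarith
    · exact he
    · exfalso
      have h2 : (j' + 1) * a ≤ j * a := Nat.mul_le_mul_right a hgt
      rw [add_mul, one_mul] at h2
      linarith
  subst hj
  exact ⟨rfl, by linarith⟩

lemma bnd {j mm r a : ℕ} (hj : j < mm) (hr : r < a) : j * a + r + 1 ≤ mm * a := by
  have h2 : (j + 1) * a ≤ mm * a := Nat.mul_le_mul_right a hj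
  rw [add_mul, one_mul] at h2
  linarith

theorem helper (m n : ℕ) (hm : 2 ≤ m) (σ : Fin n → Bool) (p q c0 s t : ℕ)
    (hs : s = sinkCt σ) (ht : t = srcCt σ)
    (HL1 : p + m * s ≤ m * (n + 1)) (HL2 : q + m * t ≤ m * (n + 1))
    (HL3 : 1 ≤ c0 ∧ c0 + m ≤ m * (n + 1) + 1)
    (HD1 : ∀ j r j', j < m → r < s → j' < m → p + j * s + r + 1 ≠ c0 + j')
    (HD2 : ∀ j r j', j < m → r < t → j' < m → q + j * t + r + 1 ≠ c0 + j')
    (HD3 : ∀ j r j' r', j < m → r < s → j' < m → r' < t →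
      p + j * s + r + 1 ≠ q + j' * t + r' + 1)
    (HW1 : ∀ j r j' r', j < m → r < s → j' < m → r' < t →
      p + j * s + r + 1 ≠ q + j' * t + r' + 1 + (c0 + j'))
    (HW2 : ∀ j r j' b, j < m → r < s → j' < m → b + s ≤ s * s →
      p + j * s + r + 1 ≠ c0 + j' + (s * p + j' * s * s + b + s))
    (HW3 : ∀ j r' j' b, j < m → r' < t → j' < m → b + s ≤ s * s →
      q + j * t + r' + 1 + (c0 + j) ≠ c0 + j' + (s * p + j' * s * s + b + s)) :
    IsDAntimagic (mStarArc m n σ) {0, 1} := by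
  set S : Finset (Fin n) := Finset.univ.filter (fun i : Fin n => σ i = false) with hS
  have hrks : ∀ i : Fin n, σ i = false → rk σ i < s := fun i hi => by
    rw [hs]; exact rk_lt_sink σ i hi
  have hrkt : ∀ i : Fin n, σ i = true → rk σ i < t := fun i hi => by
    rw [ht]; exact rk_lt_src σ i hi
  have hcard : S.card = s := by rw [hs]; rfl
  set B : ℕ := ∑ i ∈ S, rk σ i with hB
  have hBs : B + s ≤ s * s := by
    have h1 : ∀ x ∈ S, rk σ x + 1 ≤ s := by
      intro x hx
      simp only [hS, Finset.mem_filter] at hx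
      exact hrks x hx.2
    have h2 : ∑ x ∈ S, (rk σ x + 1) ≤ ∑ _x ∈ S, s := Finset.sum_le_sum h1
    rw [Finset.sum_add_distrib, Finset.sum_const, Finset.sum_const, hcard, smul_eq_mul,
      smul_eq_mul, mul_one, ← hB] at h2
    exact h2
  set g := gLab m n σ p q c0 with hg
  -- sum over sinks of copy j
  have hsum : ∀ j : Fin m, ∑ i ∈ S, g (j, some i) = s * p + (j : ℕ) * s * s + B + s := by
    intro j
    have : ∀ i ∈ S, g (j, some i) = (p + (j : ℕ) * s) + (rk σ i + 1) := by
      intro i hi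
      simp only [hS, Finset.mem_filter] at hi
      rw [hg, gLab_sink m n σ p q c0 j i hi.2, hs]
      ring
    rw [Finset.sum_congr rfl this, Finset.sum_add_distrib, Finset.sum_const,
      Finset.sum_add_distrib, Finset.sum_const, ← hB]
    have hcard : S.card = s := by rw [hs]; rfl
    rw [hcard]
    simp only [smul_eq_mul]
    ring
  -- range facts
  have hjm : ∀ j : Fin m, (j : ℕ) < m := fun j => j.isLt
  have hcardV : Fintype.card (Fin m × Option (Fin n)) = m * (n + 1) := by
    simp [Fintype.card_option]
  -- g is injective
  have hginj : Function.Injective g := by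
    rintro ⟨j, x⟩ ⟨j', x'⟩ h
    match x, x' with
    | none, none =>
      rw [hg, gLab_none, gLab_none] at h
      have : (j : ℕ) = j' := by omega
      simp [Fin.ext_iff, this]
    | none, some i' =>
      exfalso
      rw [hg, gLab_none] at h
      rcases (Bool.eq_false_or_eq_true (σ i')).symm with hi' | hi'
      · rw [gLab_sink m n σ p q c0 j' i' hi'] at h
        exact HD1 (j' : ℕ) (rk σ i') (j : ℕ) (hjm j') (hrks i' hi') (hjm j)
          (by rw [← hs] at h; omega)
      · rw [gLab_src m n σ p q c0 j' i' hi'] at h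
        exact HD2 (j' : ℕ) (rk σ i') (j : ℕ) (hjm j') (hrkt i' hi') (hjm j)
          (by rw [← ht] at h; omega)
    | some i, none =>
      exfalso
      rw [hg, gLab_none] at h
      rcases (Bool.eq_false_or_eq_true (σ i)).symm with hi | hi
      · rw [gLab_sink m n σ p q c0 j i hi] at h
        exact HD1 (j : ℕ) (rk σ i) (j' : ℕ) (hjm j) (hrks i hi) (hjm j')
          (by rw [← hs] at h; omega)
      · rw [gLab_src m n σ p q c0 j i hi] at h
        exact HD2 (j : ℕ) (rk σ i) (j' : ℕ) (hjm j) (hrkt i hi) (hjm j')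
          (by rw [← ht] at h; omega)
    | some i, some i' =>
      rcases (Bool.eq_false_or_eq_true (σ i)).symm with hi | hi <;>
        rcases (Bool.eq_false_or_eq_true (σ i')).symm with hi' | hi'
      · rw [hg, gLab_sink m n σ p q c0 j i hi, gLab_sink m n σ p q c0 j' i' hi',
          ← hs] at h
        obtain ⟨hj, hr⟩ := blk (hrks i hi) (hrks i' hi')
          (show (j : ℕ) * s + rk σ i = (j' : ℕ) * s + rk σ i' by omega)
        have : i = i' := rk_inj σ (by rw [hi, hi']) hr
        simp [Fin.ext_iff, hj, this]
      · exfalso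
        rw [hg, gLab_sink m n σ p q c0 j i hi, gLab_src m n σ p q c0 j' i' hi',
          ← hs, ← ht] at h
        exact HD3 (j : ℕ) (rk σ i) (j' : ℕ) (rk σ i') (hjm j) (hrks i hi)
          (hjm j') (hrkt i' hi') h
      · exfalso
        rw [hg, gLab_src m n σ p q c0 j i hi, gLab_sink m n σ p q c0 j' i' hi',
          ← hs, ← ht] at h
        exact HD3 (j' : ℕ) (rk σ i') (j : ℕ) (rk σ i) (hjm j') (hrks i' hi')
          (hjm j) (hrkt i hi) h.symm
      · rw [hg, gLab_src m n σ p q c0 j i hi, gLab_src m n σ p q c0 j' i' hi',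
          ← ht] at h
        obtain ⟨hj, hr⟩ := blk (hrkt i hi) (hrkt i' hi')
          (show (j : ℕ) * t + rk σ i = (j' : ℕ) * t + rk σ i' by omega)
        have : i = i' := rk_inj σ (by rw [hi, hi']) hr
        simp [Fin.ext_iff, hj, this]
  -- g maps into Icc
  have hmaps : ∀ u : Fin m × Option (Fin n), g u ∈ Set.Icc 1 (m * (n + 1)) := by
    rintro ⟨j, x⟩
    match x with
    | none =>
      rw [hg, gLab_none]
      constructor
      · omega
      · have := hjm j; omega
    | some i =>
      rcases (Bool.eq_false_or_eq_true (σ i)).symm with hi | hi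
      · rw [hg, gLab_sink m n σ p q c0 j i hi, ← hs]
        have := bnd (hjm j) (hrks i hi)
        constructor
        · omega
        · omega
      · rw [hg, gLab_src m n σ p q c0 j i hi, ← ht]
        have := bnd (hjm j) (hrkt i hi)
        constructor
        · omega
        · omega
  refine ⟨g, ?_, ?_⟩
  · rw [hcardV]
    refine ⟨fun u _ => hmaps u, hginj.injOn, ?_⟩
    have himg : g '' Set.univ = Set.Icc 1 (m * (n + 1)) := by
      apply Set.eq_of_subset_of_ncard_le
      · rintro y ⟨u, -, rfl⟩
        exact hmaps u
      · have h1 : (Set.Icc 1 (m * (n + 1))).ncard = m * (n + 1) := by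
          rw [← Finset.coe_Icc, Set.ncard_coe_finset, Nat.card_Icc]
          omega
        have h2 : (g '' Set.univ).ncard = m * (n + 1) := by
          rw [Set.ncard_image_of_injOn hginj.injOn, Set.ncard_univ,
            Nat.card_eq_fintype_card, hcardV]
        rw [h1, h2]
      · exact Set.finite_Icc _ _
    rw [← himg]
    exact Set.surjOn_image g Set.univ
  · -- weight injectivity
    have wc : ∀ j : Fin m, weightD (mStarArc m n σ) {0, 1} g (j, none)
        = c0 + (j : ℕ) + (s * p + (j : ℕ) * s * s + B + s) := by
      intro j
      rw [weight_center g j, ← hS, hsum j, hg, gLab_none]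
    have wsk : ∀ (j : Fin m) (i : Fin n), σ i = false →
        weightD (mStarArc m n σ) {0, 1} g (j, some i)
          = p + (j : ℕ) * s + rk σ i + 1 := by
      intro j i hi
      rw [weight_sink g j i hi, hg, gLab_sink m n σ p q c0 j i hi, ← hs]
    have wsrc : ∀ (j : Fin m) (i : Fin n), σ i = true →
        weightD (mStarArc m n σ) {0, 1} g (j, some i)
          = q + (j : ℕ) * t + rk σ i + 1 + (c0 + (j : ℕ)) := by
      intro j i hi
      rw [weight_source g j i hi, hg, gLab_src m n σ p q c0 j i hi, gLab_none, ← ht]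
    rintro ⟨j, x⟩ ⟨j', x'⟩ h
    match x, x' with
    | none, none =>
      rw [wc, wc] at h
      have h2 : (j : ℕ) * (s * s + 1) = (j' : ℕ) * (s * s + 1) := by
        ring_nf
        ring_nf at h
        linarith
      have h3 : (j : ℕ) = (j' : ℕ) := Nat.eq_of_mul_eq_mul_right (by omega) h2
      simp [Prod.ext_iff, Fin.ext_iff, h3]
    | none, some i' =>
      exfalso
      rw [wc] at h
      rcases (Bool.eq_false_or_eq_true (σ i')).symm with hi' | hi'
      · rw [wsk j' i' hi'] at h
        exact HW2 (j' : ℕ) (rk σ i') (j : ℕ) B (hjm j') (hrks i' hi') (hjm j) hBs h.symm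
      · rw [wsrc j' i' hi'] at h
        exact HW3 (j' : ℕ) (rk σ i') (j : ℕ) B (hjm j') (hrkt i' hi') (hjm j) hBs h.symm
    | some i, none =>
      exfalso
      rw [wc] at h
      rcases (Bool.eq_false_or_eq_true (σ i)).symm with hi | hi
      · rw [wsk j i hi] at h
        exact HW2 (j : ℕ) (rk σ i) (j' : ℕ) B (hjm j) (hrks i hi) (hjm j') hBs h
      · rw [wsrc j i hi] at h
        exact HW3 (j : ℕ) (rk σ i) (j' : ℕ) B (hjm j) (hrkt i hi) (hjm j') hBs h
    | some i, some i' =>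
      rcases (Bool.eq_false_or_eq_true (σ i)).symm with hi | hi <;>
        rcases (Bool.eq_false_or_eq_true (σ i')).symm with hi' | hi'
      · rw [wsk j i hi, wsk j' i' hi'] at h
        obtain ⟨hj, hr⟩ := blk (hrks i hi) (hrks i' hi')
          (show (j : ℕ) * s + rk σ i = (j' : ℕ) * s + rk σ i' by omega)
        have : i = i' := rk_inj σ (by rw [hi, hi']) hr
        simp [Prod.ext_iff, Fin.ext_iff, hj, this]
      · exfalso
        rw [wsk j i hi, wsrc j' i' hi'] at h
        exact HW1 (j : ℕ) (rk σ i) (j' : ℕ) (rk σ i') (hjm j) (hrks i hi) (hjm j')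
          (hrkt i' hi') h
      · exfalso
        rw [wsrc j i hi, wsk j' i' hi'] at h
        exact HW1 (j' : ℕ) (rk σ i') (j : ℕ) (rk σ i) (hjm j') (hrks i' hi') (hjm j)
          (hrkt i hi) h.symm
      · rw [wsrc j i hi, wsrc j' i' hi'] at h
        have h2 : (j : ℕ) * (t + 1) + (rk σ i + 1) = (j' : ℕ) * (t + 1) + (rk σ i' + 1) := by
          ring_nf
          ring_nf at h
          linarith
        obtain ⟨hj, hr⟩ := blk (by have := hrkt i hi; omega) (by have := hrkt i' hi'; omega) h2
        have : i = i' := rk_inj σ (by rw [hi, hi']) (by omega)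
        simp [Prod.ext_iff, Fin.ext_iff, hj, this]

lemma sink_add_src {n : ℕ} (σ : Fin n → Bool) : sinkCt σ + srcCt σ = n := by
  classical
  unfold sinkCt srcCt
  have h1 := Finset.card_filter_add_card_filter_not
    (s := (Finset.univ : Finset (Fin n))) (p := fun i : Fin n => σ i = false)
  simp only [Finset.card_univ, Fintype.card_fin] at h1
  have h2 : (Finset.univ.filter (fun a : Fin n => ¬ σ a = false))
      = Finset.univ.filter (fun i : Fin n => σ i = true) := by
    apply Finset.filter_congr
    intro x _
    simp
  rw [h2] at h1
  convert h1 using 3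

theorem mainthm (m n : ℕ) (hm : 2 ≤ m) (hn : 1 ≤ n)
    (σ : Fin n → Bool) :
    IsDAntimagic (mStarArc m n σ) {0, 1} := by
  set s := sinkCt σ with hs
  set t := srcCt σ with ht
  have hst : s + t = n := sink_add_src σ
  have hmn : m * s + m * t = m * n := by rw [← Nat.mul_add, hst]
  have hmn1 : m * (n + 1) = m * n + m := by ring
  by_cases hcase : s ≤ 1
  · -- scheme A : sinks at the bottom, then centers, then sources
    have h01 : s = 0 ∨ s = 1 := by omega
    apply helper m n hm σ 0 (m * s + m) (m * s + 1) s t hs ht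
    · linarith [Nat.zero_le (m * t)]
    · linarith
    · exact ⟨by omega, by linarith [Nat.zero_le (m * t)]⟩
    · intro j r j' hj hr hj'
      have h1 := bnd hj hr
      intro heq
      linarith
    · intro j r j' hj hr hj' heq
      linarith [Nat.zero_le (j * t)]
    · intro j r j' r' hj hr hj' hr'
      have h1 := bnd hj hr
      intro heq
      linarith [Nat.zero_le (j' * t)]
    · intro j r j' r' hj hr hj' hr'
      have h1 := bnd hj hr
      intro heq
      linarith [Nat.zero_le (j' * t), Nat.zero_le (m * s), Nat.zero_le r', Nat.zero_le j']
    · intro j r j' b hj hr hj' hb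
      have h1 := bnd hj hr
      intro heq
      linarith [Nat.zero_le (j' * s * s)]
    · intro j r' j' b hj hr' hj' hb
      rcases h01 with h0 | h0 <;> rw [h0] at hb ⊢ <;> intro heq <;>
        linarith [Nat.zero_le (j * t)]
  · -- scheme B : sources at the bottom, then sinks, then centers
    have hs2 : 2 ≤ s := by omega
    apply helper m n hm σ (m * t) 0 (m * n + 1) s t hs ht
    · linarith
    · linarith [Nat.zero_le (m * s)]
    · exact ⟨by omega, by linarith⟩
    · intro j r j' hj hr hj'
      have h1 := bnd hj hr
      intro heq
      linarith
    · intro j r j' hj hr hj'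
      have h1 := bnd hj hr
      intro heq
      linarith [Nat.zero_le (m * s)]
    · intro j r j' r' hj hr hj' hr'
      have h1 := bnd hj' hr'
      intro heq
      linarith [Nat.zero_le (j * s)]
    · intro j r j' r' hj hr hj' hr'
      have h1 := bnd hj hr
      intro heq
      linarith [Nat.zero_le (j' * t), Nat.zero_le r']
    · intro j r j' b hj hr hj' hb
      have h1 := bnd hj hr
      intro heq
      linarith [Nat.zero_le (s * (m * t)), Nat.zero_le (j' * s * s)]
    · intro j r' j' b hj hr' hj' hb
      have h1 : 2 * (m * t) ≤ s * (m * t) := Nat.mul_le_mul_right _ hs2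
      have ht1 : 1 ≤ t := by omega
      have h2 : m ≤ m * t := by
        have := Nat.mul_le_mul_left m ht1
        simpa using this
      have h3 : j * t + r' + 1 ≤ m * t := bnd hj hr'
      intro heq
      linarith [Nat.zero_le (j' * s * s)]

end AntimagicAux

/-- For `m ≥ 2` and `n ≥ 1`, in any orientation, the disjoint union
`mK⃗_{1,n}` of `m` isomorphic oriented stars is `{0,1}`-antimagic. -/
theorem mOrientedStars_zeroOne_antimagic (m n : ℕ) (hm : 2 ≤ m) (hn : 1 ≤ n)
    (σ : Fin n → Bool) :
    IsDAntimagic (mStarArc m n σ) {0, 1} := by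
  exact mainthm m n hm hn σ
end
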